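/- arXiv:2305.08451 — 3 statements merged into one kernel-verified Lean document; each statement's English description precedes it below -/
import Mathlib

section
/- Let Y : (1, ∞) → ℝ be a nonnegative, nondecreasing, differentiable function and C > 0 a constant such that Y(L) ≤ C·√(Y'(L)) for all L > 1. Then Y(L) = 0 for all L > 1. -/
theorem liouville_diff_ineq_zero
    (Y : ℝ → ℝ) (C : ℝ) (hC : 0 < C)
    (hnonneg : ∀ L, 1 < L → 0 ≤ Y L)
    (hmono : MonotoneOn Y (Set.Ioi (1 : ℝ)))
    (hdiff : ∀ L, 1 < L → DifferentiableAt ℝ Y L)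
    (hineq : ∀ L, 1 < L → Y L ≤ C * Real.sqrt (deriv Y L)) :
    ∀ L, 1 < L → Y L = 0 := by
  intro L₁ hL₁
  by_contra hne
  have ha : 0 < Y L₁ := lt_of_le_of_ne (hnonneg L₁ hL₁) (Ne.symm hne)
  set a := Y L₁ with ha_def
  set M : ℝ := L₁ + C ^ 2 / a + 1 with hM_def
  have hC2 : (0 : ℝ) < C ^ 2 := by positivity
  have hL₁M : L₁ < M := by
    rw [hM_def]
    have : 0 < C ^ 2 / a + 1 := by positivity
    linarith
  -- Y ≥ a on [L₁, M]
  have hYa : ∀ x ∈ Set.Icc L₁ M, a ≤ Y x := by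
    intro x hx
    exact hmono (Set.mem_Ioi.mpr hL₁) (Set.mem_Ioi.mpr (lt_of_lt_of_le hL₁ hx.1)) hx.1
  have hx1 : ∀ x ∈ Set.Icc L₁ M, 1 < x := fun x hx => lt_of_lt_of_le hL₁ hx.1
  -- derivative lower bound: Y' x ≥ (Y x)^2 / C^2 on Icc
  have hderiv_lb : ∀ x ∈ Set.Icc L₁ M, Y x ^ 2 / C ^ 2 ≤ deriv Y x := by
    intro x hx
    have h1 : 1 < x := hx1 x hx
    have hYx : 0 < Y x := lt_of_lt_of_le ha (hYa x hx)
    have h := hineq x h1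
    have hd : 0 ≤ deriv Y x := by
      by_contra hd
      push_neg at hd
      rw [Real.sqrt_eq_zero_of_nonpos (le_of_lt hd)] at h
      simp at h
      linarith
    have hsq : Y x ^ 2 ≤ (C * Real.sqrt (deriv Y x)) ^ 2 := by
      apply sq_le_sq' _ h
      nlinarith [Real.sqrt_nonneg (deriv Y x)]
    rw [mul_pow, Real.sq_sqrt hd] at hsq
    rw [div_le_iff₀ hC2]
    linarith
  -- h = 1/Y + x/C² is antitone on Icc L₁ M
  set h : ℝ → ℝ := fun x => (Y x)⁻¹ + x / C ^ 2 with hh_def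
  have hanti : AntitoneOn h (Set.Icc L₁ M) := by
    have hdiffh : ∀ x ∈ Set.Icc L₁ M, HasDerivAt h (-(deriv Y x) / Y x ^ 2 + 1 / C ^ 2) x := by
      intro x hx
      have hYx : 0 < Y x := lt_of_lt_of_le ha (hYa x hx)
      have hY : HasDerivAt Y (deriv Y x) x := (hdiff x (hx1 x hx)).hasDerivAt
      have hinv := hY.inv (ne_of_gt hYx)
      have hlin : HasDerivAt (fun x : ℝ => x / C ^ 2) (1 / C ^ 2) x := by
        simpa using (hasDerivAt_id x).div_const (C ^ 2)
      exact hinv.add hlin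
    apply antitoneOn_of_deriv_nonpos (convex_Icc L₁ M)
    · exact fun x hx => ((hdiffh x hx).differentiableAt).continuousAt.continuousWithinAt
    · intro x hx
      rw [interior_Icc] at hx
      exact ((hdiffh x (Set.mem_Icc_of_Ioo hx)).differentiableAt).differentiableWithinAt
    · intro x hx
      rw [interior_Icc] at hx
      have hx' := Set.mem_Icc_of_Ioo hx
      rw [(hdiffh x hx').deriv]
      have hYx : 0 < Y x := lt_of_lt_of_le ha (hYa x hx')
      have hlb := hderiv_lb x hx'
      rw [div_le_iff₀ hC2] at hlb
      rw [div_add_div _ _ (by positivity : (Y x ^ 2 : ℝ) ≠ 0) (ne_of_gt hC2)]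
      apply div_nonpos_of_nonpos_of_nonneg _ (by positivity)
      nlinarith
  have hMm : h M ≤ h L₁ :=
    hanti (Set.left_mem_Icc.mpr (le_of_lt hL₁M)) (Set.right_mem_Icc.mpr (le_of_lt hL₁M))
      (le_of_lt hL₁M)
  have hYM : 0 < Y M :=
    lt_of_lt_of_le ha (hYa M (Set.right_mem_Icc.mpr (le_of_lt hL₁M)))
  have h1 : (Y M)⁻¹ > 0 := by positivity
  have h2 : (Y L₁)⁻¹ = a⁻¹ := by rw [ha_def]
  simp only [hh_def] at hMm
  rw [h2] at hMm
  have : M / C ^ 2 < a⁻¹ + L₁ / C ^ 2 := by linarith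
  rw [hM_def] at this
  have hfin : (L₁ + C ^ 2 / a + 1) / C ^ 2 = L₁ / C ^ 2 + 1 / a + 1 / C ^ 2 := by
    field_simp
  rw [hfin] at this
  have : (1 : ℝ) / a + 1 / C ^ 2 < a⁻¹ := by linarith
  rw [one_div] at this
  have : (1 : ℝ) / C ^ 2 < 0 := by linarith
  have : (0 : ℝ) < 1 / C ^ 2 := by positivity
  linarith
end

section
/- If a nonnegative, nondecreasing, differentiable function Y on (1,∞) satisfies Y(L)² ≤ C² · Y'(L) for all L > 1 and Y(L₀) > 0 for some L₀ > 1, then for all L > L₀, L − L₀ ≤ C² / Y(L₀), which yields a contradiction; hence no such L₀ exists. -/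
theorem liouville_contradiction_step
    (Y : ℝ → ℝ) (C : ℝ) (hC : 0 < C)
    (hnonneg : ∀ L, 1 < L → 0 ≤ Y L)
    (hmono : MonotoneOn Y (Set.Ioi (1 : ℝ)))
    (hdiff : ∀ L, 1 < L → DifferentiableAt ℝ Y L)
    (hineq : ∀ L, 1 < L → Y L ^ 2 ≤ C ^ 2 * deriv Y L) :
    (∀ L₀, 1 < L₀ → 0 < Y L₀ → ∀ L, L₀ < L → L - L₀ ≤ C ^ 2 / Y L₀) ∧
    ¬ ∃ L₀, 1 < L₀ ∧ 0 < Y L₀ := by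
  have key : ∀ L₀, 1 < L₀ → 0 < Y L₀ → ∀ L, L₀ < L → L - L₀ ≤ C ^ 2 / Y L₀ := by
    intro L₀ hL₀ hY₀ L hL
    have hgt : ∀ x ∈ Set.Icc L₀ L, 1 < x := fun x hx => lt_of_lt_of_le hL₀ hx.1
    have hpos : ∀ x ∈ Set.Icc L₀ L, 0 < Y x := by
      intro x hx
      exact lt_of_lt_of_le hY₀
        (hmono (Set.mem_Ioi.2 hL₀) (Set.mem_Ioi.2 (hgt x hx)) hx.1)
    set f : ℝ → ℝ := fun x => x + C ^ 2 / Y x with hf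
    have hanti : AntitoneOn f (Set.Icc L₀ L) := by
      apply antitoneOn_of_deriv_nonpos (convex_Icc _ _)
      · apply ContinuousOn.add continuousOn_id
        exact ContinuousOn.div continuousOn_const
          (fun x hx => (hdiff x (hgt x hx)).continuousAt.continuousWithinAt)
          (fun x hx => (hpos x hx).ne')
      · intro x hx
        rw [interior_Icc] at hx
        have hx' := Set.mem_Icc_of_Ioo hx
        exact (differentiableAt_id.add ((differentiableAt_const _).div
          (hdiff x (hgt x hx')) (hpos x hx').ne')).differentiableWithinAt
      · intro x hx
        rw [interior_Icc] at hx
        have hx' := Set.mem_Icc_of_Ioo hx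
        have hYx := hpos x hx'
        have h1 : 1 < x := hgt x hx'
        have hda : HasDerivAt f (1 + (0 * Y x - C ^ 2 * deriv Y x) / (Y x) ^ 2) x :=
          (hasDerivAt_id x).add
            ((hasDerivAt_const x (C ^ 2)).div ((hdiff x h1).hasDerivAt) hYx.ne')
        have hd : deriv f x = 1 - C ^ 2 * deriv Y x / (Y x) ^ 2 := by
          rw [hda.deriv]; ring
        rw [hd]
        have hi := hineq x h1
        have h2 : 1 ≤ C ^ 2 * deriv Y x / (Y x) ^ 2 := by
          rw [le_div_iff₀ (by positivity)]
          linarith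
        linarith
    have hfe := hanti (Set.left_mem_Icc.2 hL.le) (Set.right_mem_Icc.2 hL.le) hL.le
    have hYL : 0 < Y L := hpos L (Set.right_mem_Icc.2 hL.le)
    have hfe' : L + C ^ 2 / Y L ≤ L₀ + C ^ 2 / Y L₀ := hfe
    have hq : 0 ≤ C ^ 2 / Y L := by positivity
    linarith
  refine ⟨key, ?_⟩
  rintro ⟨L₀, hL₀, hY₀⟩
  have hbig : L₀ < L₀ + C ^ 2 / Y L₀ + 1 := by
    have : 0 < C ^ 2 / Y L₀ := by positivity
    linarith
  have := key L₀ hL₀ hY₀ _ hbig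
  linarith
end

section
/- Let 0 < R₁ < R₂ and let f : [R₁, R₂] → ℝ be continuously differentiable with f(R₁) = f(R₂) = 0. Then ∫_{R₁}^{R₂} f(r)² r dr ≤ (R₂(R₂−R₁)²)/(R₁ π²) · ∫_{R₁}^{R₂} (f'(r))² r dr. -/
/-!
Bound the weight `r` above by `R₂` on the left and below by `R₁` on the right; what remains is
Wirtinger's inequality `∫ f² ≤ ((b - a) / π)² ∫ f'²` for `f` vanishing at `a` and `b`. For it,
expand `0 ≤ (f' - φ f)²` with `φ` a solution of the Riccati equation `φ' = -(k + φ²)`: since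
`φ f²` vanishes at both ends, this gives `k ∫ f² ≤ ∫ f'²`. The solution `φ = c cot (c (x - x₀))`
with `c = π / L` is regular on `[a, b]` as soon as `L > b - a`, and `L → b - a` gives the constant.
-/

open Set MeasureTheory intervalIntegral Real

lemma hasDerivAt_mul_cos_div_sin (c x₀ x : ℝ) (hx : sin (c * (x - x₀)) ≠ 0) :
    HasDerivAt (fun y => c * cos (c * (y - x₀)) / sin (c * (y - x₀)))
      (-(c ^ 2 + (c * cos (c * (x - x₀)) / sin (c * (x - x₀))) ^ 2)) x := by
  have hθ : HasDerivAt (fun y => c * (y - x₀)) c x := by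
    simpa using ((hasDerivAt_id x).sub_const x₀).const_mul c
  have hnum := ((hasDerivAt_cos _).comp x hθ).const_mul c
  have hden := (hasDerivAt_sin _).comp x hθ
  refine (hnum.div hden hx).congr_deriv ?_
  simp only [Function.comp_apply]
  field_simp
  ring

lemma mul_integral_sq_le_integral_deriv_sq_of_riccati {a b k : ℝ} (hab : a ≤ b)
    {f f' φ : ℝ → ℝ} (hf : ContinuousOn f (Icc a b)) (hf' : ContinuousOn f' (Icc a b))
    (hderiv : ∀ x ∈ Ioo a b, HasDerivAt f (f' x) x)
    (hφ : ∀ x ∈ Icc a b, HasDerivAt φ (-(k + φ x ^ 2)) x)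
    (ha : f a = 0) (hb : f b = 0) :
    k * ∫ x in a..b, f x ^ 2 ≤ ∫ x in a..b, f' x ^ 2 := by
  have hφc : ContinuousOn φ (Icc a b) := fun x hx => (hφ x hx).continuousAt.continuousWithinAt
  set F' : ℝ → ℝ := fun x => -(k + φ x ^ 2) * f x ^ 2 + φ x * (2 * f x * f' x)
  have hF'c : ContinuousOn F' (Icc a b) := by fun_prop
  have hint : ∀ {g : ℝ → ℝ}, ContinuousOn g (Icc a b) → IntervalIntegrable g volume a b :=
    fun hg => hg.intervalIntegrable_of_Icc hab
  have hFTC : ∫ x in a..b, F' x = 0 := by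
    rw [integral_eq_sub_of_hasDeriv_right_of_le hab (hφc.mul (hf.pow 2))
      (fun x hx => ((hφ x (Ioo_subset_Icc_self hx)).mul
        ((hderiv x hx).pow 2)).hasDerivWithinAt.congr_deriv
          (by simp only [F', Pi.pow_apply]; ring)) (hint hF'c)]
    simp [ha, hb]
  -- `f'² = (f' - φ f)² + (φ f²)' + k f²`
  have hsq : ∀ x, k * f x ^ 2 ≤ f' x ^ 2 - F' x := fun x => by
    nlinarith [sq_nonneg (f' x - φ x * f x)]
  calc k * ∫ x in a..b, f x ^ 2 = ∫ x in a..b, (k * f x ^ 2) :=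
        (intervalIntegral.integral_const_mul _ _).symm
    _ ≤ ∫ x in a..b, (f' x ^ 2 - F' x) :=
        integral_mono_on hab ((hint (hf.pow 2)).const_mul k)
          ((hint (hf'.pow 2)).sub (hint hF'c)) fun x _ => hsq x
    _ = ∫ x in a..b, f' x ^ 2 := by
        rw [intervalIntegral.integral_sub (f := fun x => f' x ^ 2) (hint (hf'.pow 2)) (hint hF'c),
          hFTC, sub_zero]

lemma sq_pi_div_mul_integral_sq_le_of_lt {a b L : ℝ} (hab : a ≤ b) (hL : b - a < L)
    {f f' : ℝ → ℝ}
    (hf : ContinuousOn f (Icc a b)) (hf' : ContinuousOn f' (Icc a b))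
    (hderiv : ∀ x ∈ Ioo a b, HasDerivAt f (f' x) x) (ha : f a = 0) (hb : f b = 0) :
    (π / L) ^ 2 * ∫ x in a..b, f x ^ 2 ≤ ∫ x in a..b, f' x ^ 2 := by
  have hLpos : 0 < L := by linarith
  -- centre the cotangent so that its poles `(a + b ± L) / 2` lie just outside `[a, b]`
  have hsin : ∀ x ∈ Icc a b, sin (π / L * (x - (a + b - L) / 2)) ≠ 0 := fun x hx => by
    refine (sin_pos_of_pos_of_lt_pi (mul_pos (by positivity) (by linarith [hx.1])) ?_).ne'
    rw [div_mul_eq_mul_div, div_lt_iff₀ hLpos]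
    exact mul_lt_mul_of_pos_left (by linarith [hx.2]) pi_pos
  exact mul_integral_sq_le_integral_deriv_sq_of_riccati hab hf hf' hderiv
    (fun x hx => hasDerivAt_mul_cos_div_sin _ _ x (hsin x hx)) ha hb

lemma sq_pi_div_mul_integral_sq_le {a b : ℝ} (hab : a < b) {f f' : ℝ → ℝ}
    (hf : ContinuousOn f (Icc a b)) (hf' : ContinuousOn f' (Icc a b))
    (hderiv : ∀ x ∈ Ioo a b, HasDerivAt f (f' x) x) (ha : f a = 0) (hb : f b = 0) :
    (π / (b - a)) ^ 2 * ∫ x in a..b, f x ^ 2 ≤ ∫ x in a..b, f' x ^ 2 := by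
  have hcont : ContinuousAt (fun L => (π / L) ^ 2 * ∫ x in a..b, f x ^ 2) (b - a) := by
    have : b - a ≠ 0 := (sub_pos.2 hab).ne'
    fun_prop (disch := assumption)
  exact le_of_tendsto (hcont.tendsto.mono_left nhdsWithin_le_nhds)
    (eventually_nhdsWithin_of_forall fun L (hL : L ∈ Ioi (b - a)) =>
      sq_pi_div_mul_integral_sq_le_of_lt hab.le hL hf hf' hderiv ha hb)

lemma integral_comp_deriv_eq_derivWithin_Icc {E G : Type*} [NormedAddCommGroup E]
    [NormedSpace ℝ E] [NormedAddCommGroup G] [NormedSpace ℝ G] {a b : ℝ} (hab : a ≤ b)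
    (F : ℝ → E → G) (f : ℝ → E) :
    ∫ x in a..b, F x (deriv f x) = ∫ x in a..b, F x (derivWithin f (Icc a b) x) := by
  rw [integral_of_le hab, integral_of_le hab, integral_Ioc_eq_integral_Ioo,
    integral_Ioc_eq_integral_Ioo]
  exact setIntegral_congr_fun measurableSet_Ioo fun x hx => by
    rw [derivWithin_of_mem_nhds (Icc_mem_nhds hx.1 hx.2)]

lemma integral_mul_le_mul_integral_of_le {a b M : ℝ} (hab : a ≤ b) {g w : ℝ → ℝ}
    (hgw : IntervalIntegrable (fun x => g x * w x) volume a b)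
    (hg : IntervalIntegrable g volume a b) (hg₀ : ∀ x ∈ Icc a b, 0 ≤ g x)
    (hw : ∀ x ∈ Icc a b, w x ≤ M) :
    ∫ x in a..b, g x * w x ≤ M * ∫ x in a..b, g x := by
  rw [← intervalIntegral.integral_const_mul]
  exact integral_mono_on hab hgw (hg.const_mul M) fun x hx => by
    nlinarith [hg₀ x hx, hw x hx]

lemma mul_integral_le_integral_mul_of_le {a b m : ℝ} (hab : a ≤ b) {g w : ℝ → ℝ}
    (hgw : IntervalIntegrable (fun x => g x * w x) volume a b)
    (hg : IntervalIntegrable g volume a b) (hg₀ : ∀ x ∈ Icc a b, 0 ≤ g x)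
    (hw : ∀ x ∈ Icc a b, m ≤ w x) :
    m * ∫ x in a..b, g x ≤ ∫ x in a..b, g x * w x := by
  rw [← intervalIntegral.integral_const_mul]
  exact integral_mono_on hab (hg.const_mul m) hgw fun x hx => by
    nlinarith [hg₀ x hx, hw x hx]

theorem weighted_poincare_annulus
    (R₁ R₂ : ℝ) (hR₁ : 0 < R₁) (hR : R₁ < R₂)
    (f : ℝ → ℝ) (hf : ContDiffOn ℝ 1 f (Set.Icc R₁ R₂))
    (hb1 : f R₁ = 0) (hb2 : f R₂ = 0) :
    ∫ r in R₁..R₂, (f r) ^ 2 * r ≤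
      (R₂ * (R₂ - R₁) ^ 2 / (R₁ * Real.pi ^ 2)) * ∫ r in R₁..R₂, (deriv f r) ^ 2 * r := by
  set f' := derivWithin f (Icc R₁ R₂)
  have hfc : ContinuousOn f (Icc R₁ R₂) := hf.continuousOn
  have hf'c : ContinuousOn f' (Icc R₁ R₂) :=
    hf.continuousOn_derivWithin (uniqueDiffOn_Icc hR) le_rfl
  have hderiv : ∀ x ∈ Ioo R₁ R₂, HasDerivAt f (f' x) x := fun x hx =>
    (hf.differentiableOn one_ne_zero x (Ioo_subset_Icc_self hx)).hasDerivWithinAt.hasDerivAt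
      (Icc_mem_nhds hx.1 hx.2)
  have hint : ∀ {g : ℝ → ℝ}, ContinuousOn g (Icc R₁ R₂) → IntervalIntegrable g volume R₁ R₂ :=
    fun hg => hg.intervalIntegrable_of_Icc hR.le
  have hwirtinger := sq_pi_div_mul_integral_sq_le hR hfc hf'c hderiv hb1 hb2
  have hf_le := integral_mul_le_mul_integral_of_le (g := fun x => f x ^ 2) hR.le
    (hint (by fun_prop)) (hint (hfc.pow 2)) (fun x _ => sq_nonneg (f x)) fun x hx => hx.2
  have hf'_ge := mul_integral_le_integral_mul_of_le (g := fun x => f' x ^ 2) hR.le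
    (hint (by fun_prop)) (hint (hf'c.pow 2)) (fun x _ => sq_nonneg (f' x)) fun x hx => hx.1
  rw [integral_comp_deriv_eq_derivWithin_Icc hR.le (fun r y => y ^ 2 * r)]
  have hR₂ : 0 < R₂ := hR₁.trans hR
  have hL : R₂ - R₁ ≠ 0 := (sub_pos.2 hR).ne'
  calc ∫ r in R₁..R₂, f r ^ 2 * r ≤ R₂ * ∫ r in R₁..R₂, f r ^ 2 := hf_le
    _ = R₂ * (R₂ - R₁) ^ 2 / (R₁ * π ^ 2) *
          (R₁ * ((π / (R₂ - R₁)) ^ 2 * ∫ r in R₁..R₂, f r ^ 2)) := by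
      field_simp
    _ ≤ R₂ * (R₂ - R₁) ^ 2 / (R₁ * π ^ 2) * (R₁ * ∫ r in R₁..R₂, f' r ^ 2) := by gcongr
    _ ≤ R₂ * (R₂ - R₁) ^ 2 / (R₁ * π ^ 2) * ∫ r in R₁..R₂, f' r ^ 2 * r := by gcongr
end
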